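/- arXiv:2210.03214 — 5 statements merged into one kernel-verified Lean document; each statement's English description precedes it below -/
import Mathlib

section
/- Let Δ ⊆ ℝ^n be a nonempty closed convex set, Ψ : ℝ^n → ℝ differentiable and σ_Ψ-strongly convex on Δ (i.e., D_Ψ(x,y) ≥ (σ_Ψ/2)‖x−y‖² on Δ, with D_Ψ(x,y) = Ψ(x) − Ψ(y) − ⟨∇Ψ(y), x−y⟩), and A > 0, B ≥ 0, φ* ≥ 0 constants. Let μ* ∈ Δ and let (μ^t)_{t≥1} ⊆ Δ, (ℓ^t)_{t≥1} ⊆ ℝ^n, and real numbers (φ^t)_{t≥1} with φ^t ≥ 0 satisfy for each t: (a) ‖ℓ^t‖² ≤ A φ^t + B; (b) ⟨μ* − μ^t, ℓ^t⟩ ≤ φ* − φ^t; (c) μ^{t+1} satisfies ⟨η_t ℓ^t + ∇Ψ(μ^{t+1}) − ∇Ψ(μ^t), μ^{t+1} − ν⟩ ≤ 0 for all ν ∈ Δ, where the step sizes satisfy 0 < η_{t+1} ≤ η_t ≤ σ_Ψ/(2A). Let a† ≥ D_Ψ(μ*, μ^1) and C₁ = φ* + B/A. Then for every t ≥ 1: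 D_Ψ(μ*, μ^{t+1}) − D_Ψ(μ*, μ^t) ≤ η_t C₁, and consequently ‖μ^{t+1} − μ*‖² ≤ (2/σ_Ψ)(C₁ Σ_{k=1}^t η_k + a†). -/
/-!
The three-point identity of the Bregman divergence, combined with the optimality condition of the
mirror step at `ν = μ*`, Cauchy–Schwarz and strong convexity, gives the classical one-step bound
`D(μ*, μ^{t+1}) - D(μ*, μ^t) ≤ η_t ⟪ℓ^t, μ* - μ^t⟫ + η_t² ‖ℓ^t‖² / (2σ)`.
The first term is at most `η_t (φ* - φ^t)`; by linear growth and `η_t ≤ σ/(2A)` the second is at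
most `η_t (φ^t + B/A) / 4`, and `φ^t + B/A ≥ 0` because it dominates `‖ℓ^t‖² / A`. Telescoping the
per-step bound from `D(μ*, μ^1) ≤ a†` and applying strong convexity once more gives the distance
bound.
-/

open scoped RealInnerProductSpace

section Bregman

variable {E : Type*} [NormedAddCommGroup E] [InnerProductSpace ℝ E]

/-- The Bregman divergence of `Ψ`, with `g` playing the role of its gradient. -/
def bregmanDiv (Ψ : E → ℝ) (g : E → E) (x y : E) : ℝ :=
  Ψ x - Ψ y - ⟪g y, x - y⟫

theorem bregmanDiv_three_point (Ψ : E → ℝ) (g : E → E) (z x x' : E) :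
    bregmanDiv Ψ g z x' - bregmanDiv Ψ g z x + bregmanDiv Ψ g x' x = ⟪g x' - g x, x' - z⟫ := by
  simp only [bregmanDiv, inner_sub_left, inner_sub_right]
  ring

theorem mul_sub_half_mul_sq_le {a d σ : ℝ} (hσ : 0 < σ) :
    a * d - σ / 2 * d ^ 2 ≤ a ^ 2 / (2 * σ) := by
  rw [le_div_iff₀ (by positivity)]
  nlinarith [sq_nonneg (a - σ * d)]

/-- `hopt` is the first-order optimality condition of the mirror step `x ↦ x'` with loss vector `v`,
tested at the comparator `z`. -/
theorem bregmanDiv_sub_le_of_mirror_step {Ψ : E → ℝ} {g : E → E} {σ : ℝ} (hσ : 0 < σ)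
    {x x' z v : E} (hstrong : σ / 2 * ‖x' - x‖ ^ 2 ≤ bregmanDiv Ψ g x' x)
    (hopt : ⟪v + g x' - g x, x' - z⟫ ≤ 0) :
    bregmanDiv Ψ g z x' - bregmanDiv Ψ g z x ≤ ⟪v, z - x⟫ + ‖v‖ ^ 2 / (2 * σ) := by
  have hsplit : ⟪v + g x' - g x, x' - z⟫ = ⟪g x' - g x, x' - z⟫ + ⟪v, x - z⟫ + ⟪v, x' - x⟫ := by
    simp only [add_sub_assoc, inner_add_left, inner_sub_right]
    ring
  have hcs : ⟪v, x - x'⟫ ≤ ‖v‖ * ‖x' - x‖ := norm_sub_rev x' x ▸ real_inner_le_norm v (x - x')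
  have hzx : ⟪v, z - x⟫ = -⟪v, x - z⟫ := by rw [← inner_neg_right, neg_sub]
  have hxx : ⟪v, x - x'⟫ = -⟪v, x' - x⟫ := by rw [← inner_neg_right, neg_sub]
  have := bregmanDiv_three_point Ψ g z x x'
  linarith [mul_sub_half_mul_sq_le (a := ‖v‖) (d := ‖x' - x‖) hσ]

theorem bregmanDiv_sub_le_of_linear_growth {Ψ : E → ℝ} {g : E → E} {σ A B φ φstar η : ℝ}
    (hσ : 0 < σ) (hA : 0 < A) (hη : 0 ≤ η) (hηle : η ≤ σ / (2 * A)) {x x' z ℓ : E}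
    (hstrong : σ / 2 * ‖x' - x‖ ^ 2 ≤ bregmanDiv Ψ g x' x)
    (hopt : ⟪η • ℓ + g x' - g x, x' - z⟫ ≤ 0)
    (hgrowth : ‖ℓ‖ ^ 2 ≤ A * φ + B) (hconvx : ⟪z - x, ℓ⟫ ≤ φstar - φ) :
    bregmanDiv Ψ g z x' - bregmanDiv Ψ g z x ≤ η * (φstar + B / A) := by
  have hstep := bregmanDiv_sub_le_of_mirror_step hσ hstrong hopt
  rw [real_inner_smul_left, norm_smul, mul_pow, Real.norm_eq_abs, sq_abs, real_inner_comm] at hstep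
  have hη2A : 2 * A * η ≤ σ := by rwa [le_div_iff₀ (by positivity), mul_comm] at hηle
  have hquad : η ^ 2 * ‖ℓ‖ ^ 2 / (2 * σ) ≤ η * (A * φ + B) / A / 4 := by
    rw [div_div, div_le_div_iff₀ (by positivity) (by positivity)]
    nlinarith [mul_le_mul_of_nonneg_right hη2A (mul_nonneg hη (sq_nonneg ‖ℓ‖)),
      mul_le_mul_of_nonneg_left hgrowth (mul_nonneg hσ.le hη)]
  have hgap : 0 ≤ η * (A * φ + B) / A :=
    div_nonneg (mul_nonneg hη ((sq_nonneg _).trans hgrowth)) hA.le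
  have hsplit : η * (φstar + B / A) = η * (φstar - φ) + η * (A * φ + B) / A := by
    field_simp
    ring
  have hlin : η * (φstar - φ) + η ^ 2 * ‖ℓ‖ ^ 2 / (2 * σ) ≤ η * (φstar + B / A) := by
    rw [hsplit]
    linarith
  calc bregmanDiv Ψ g z x' - bregmanDiv Ψ g z x
      ≤ η * ⟪z - x, ℓ⟫ + η ^ 2 * ‖ℓ‖ ^ 2 / (2 * σ) := hstep
    _ ≤ η * (φstar - φ) + η ^ 2 * ‖ℓ‖ ^ 2 / (2 * σ) := by gcongr
    _ ≤ η * (φstar + B / A) := hlin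

end Bregman

theorem le_add_sum_Icc_of_sub_le {a c : ℕ → ℝ} (h : ∀ k ≥ 1, a (k + 1) - a k ≤ c k) (t : ℕ) :
    a (t + 1) ≤ a 1 + ∑ k ∈ Finset.Icc 1 t, c k := by
  induction t with
  | zero => simp
  | succ t ih =>
    rw [Finset.sum_Icc_succ_top (by omega)]
    linarith [h (t + 1) (by omega)]

theorem md_post_attack_distance_bound_general
    {n : ℕ}
    (Δ : Set (EuclideanSpace ℝ (Fin n)))
    (Ψ : EuclideanSpace ℝ (Fin n) → ℝ)
    (gΨ : EuclideanSpace ℝ (Fin n) → EuclideanSpace ℝ (Fin n))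
    (D : EuclideanSpace ℝ (Fin n) → EuclideanSpace ℝ (Fin n) → ℝ)
    (hD : ∀ x y, D x y = Ψ x - Ψ y - ⟪gΨ y, x - y⟫)
    (σΨ : ℝ) (hσΨ : 0 < σΨ)
    (hstrong : ∀ x ∈ Δ, ∀ y ∈ Δ, σΨ / 2 * ‖x - y‖ ^ 2 ≤ D x y)
    (A B φstar : ℝ) (hA : 0 < A)
    (μstar : EuclideanSpace ℝ (Fin n)) (hμstar : μstar ∈ Δ)
    (μ : ℕ → EuclideanSpace ℝ (Fin n)) (ℓ : ℕ → EuclideanSpace ℝ (Fin n))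
    (φ : ℕ → ℝ) (η : ℕ → ℝ)
    (hμΔ : ∀ t ≥ 1, μ t ∈ Δ)
    (hgrowth : ∀ t ≥ 1, ‖ℓ t‖ ^ 2 ≤ A * φ t + B)
    (hconvx : ∀ t ≥ 1, ⟪μstar - μ t, ℓ t⟫ ≤ φstar - φ t)
    (hopt : ∀ t ≥ 1, ∀ ν ∈ Δ,
      ⟪η t • ℓ t + gΨ (μ (t + 1)) - gΨ (μ t), μ (t + 1) - ν⟫ ≤ 0)
    (hηpos : ∀ t ≥ 1, 0 < η t)
    (hηle : ∀ t ≥ 1, η t ≤ σΨ / (2 * A))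
    (adag : ℝ) (hadag : D μstar (μ 1) ≤ adag)
    (C₁ : ℝ) (hC₁ : C₁ = φstar + B / A) :
    ∀ t ≥ 1,
      D μstar (μ (t + 1)) - D μstar (μ t) ≤ η t * C₁ ∧
      ‖μ (t + 1) - μstar‖ ^ 2 ≤ 2 / σΨ * (C₁ * ∑ k ∈ Finset.Icc 1 t, η k + adag) := by
  obtain rfl : D = bregmanDiv Ψ gΨ := funext₂ hD
  have hstep : ∀ t ≥ 1,
      bregmanDiv Ψ gΨ μstar (μ (t + 1)) - bregmanDiv Ψ gΨ μstar (μ t) ≤ η t * C₁ :=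
    fun t ht => hC₁ ▸ bregmanDiv_sub_le_of_linear_growth hσΨ hA (hηpos t ht).le (hηle t ht)
      (hstrong _ (hμΔ (t + 1) (by omega)) _ (hμΔ t ht)) (hopt t ht μstar hμstar)
      (hgrowth t ht) (hconvx t ht)
  intro t ht
  refine ⟨hstep t ht, ?_⟩
  have hdist : bregmanDiv Ψ gΨ μstar (μ (t + 1)) ≤ C₁ * ∑ k ∈ Finset.Icc 1 t, η k + adag := by
    rw [mul_comm, Finset.sum_mul]
    linarith [le_add_sum_Icc_of_sub_le (a := fun k => bregmanDiv Ψ gΨ μstar (μ k)) hstep t]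
  have hσ := norm_sub_rev μstar (μ (t + 1)) ▸ hstrong _ hμstar _ (hμΔ (t + 1) (by omega))
  rw [div_mul_eq_mul_div, le_div_iff₀ hσΨ]
  linarith

/-- First part of Lemma 2 of the paper: deterministic distance bound for
post-attack mirror-descent iterates,
`D_Ψ(μ*, μ^{t+1}) − D_Ψ(μ*, μ^t) ≤ η_t C₁` and
`‖μ^{t+1} − μ*‖² ≤ (2/σ_Ψ)(C₁ Σ_{k=1}^t η_k + a†)`. -/
theorem md_post_attack_distance_bound
    {n : ℕ}
    (Δ : Set (EuclideanSpace ℝ (Fin n)))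
    (hΔne : Δ.Nonempty) (hΔclosed : IsClosed Δ) (hΔconv : Convex ℝ Δ)
    (Ψ : EuclideanSpace ℝ (Fin n) → ℝ)
    (gΨ : EuclideanSpace ℝ (Fin n) → EuclideanSpace ℝ (Fin n))
    (hΨ : ∀ x, HasGradientAt Ψ (gΨ x) x)
    (D : EuclideanSpace ℝ (Fin n) → EuclideanSpace ℝ (Fin n) → ℝ)
    (hD : ∀ x y, D x y = Ψ x - Ψ y - ⟪gΨ y, x - y⟫)
    (σΨ : ℝ) (hσΨ : 0 < σΨ)
    (hstrong : ∀ x ∈ Δ, ∀ y ∈ Δ, σΨ / 2 * ‖x - y‖ ^ 2 ≤ D x y)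
    (A B φstar : ℝ) (hA : 0 < A) (hB : 0 ≤ B) (hφstar : 0 ≤ φstar)
    (μstar : EuclideanSpace ℝ (Fin n)) (hμstar : μstar ∈ Δ)
    (μ : ℕ → EuclideanSpace ℝ (Fin n)) (ℓ : ℕ → EuclideanSpace ℝ (Fin n))
    (φ : ℕ → ℝ) (η : ℕ → ℝ)
    (hμΔ : ∀ t ≥ 1, μ t ∈ Δ)
    (hφpos : ∀ t ≥ 1, 0 ≤ φ t)
    (hgrowth : ∀ t ≥ 1, ‖ℓ t‖ ^ 2 ≤ A * φ t + B)
    (hconvx : ∀ t ≥ 1, ⟪μstar - μ t, ℓ t⟫ ≤ φstar - φ t)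
    (hopt : ∀ t ≥ 1, ∀ ν ∈ Δ,
      ⟪η t • ℓ t + gΨ (μ (t + 1)) - gΨ (μ t), μ (t + 1) - ν⟫ ≤ 0)
    (hηpos : ∀ t ≥ 1, 0 < η t)
    (hηdec : ∀ t ≥ 1, η (t + 1) ≤ η t)
    (hηle : ∀ t ≥ 1, η t ≤ σΨ / (2 * A))
    (adag : ℝ) (hadag : D μstar (μ 1) ≤ adag)
    (C₁ : ℝ) (hC₁ : C₁ = φstar + B / A) :
    ∀ t ≥ 1,
      D μstar (μ (t + 1)) - D μstar (μ t) ≤ η t * C₁ ∧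
      ‖μ (t + 1) - μstar‖ ^ 2 ≤ 2 / σΨ * (C₁ * ∑ k ∈ Finset.Icc 1 t, η k + adag) :=
  md_post_attack_distance_bound_general Δ Ψ gΨ D hD σΨ hσΨ hstrong A B φstar hA μstar hμstar μ ℓ φ η
    hμΔ hgrowth hconvx hopt hηpos hηle adag hadag C₁ hC₁
end

section
/- Under the same hypotheses as follows—Δ ⊆ ℝ^n nonempty closed convex; Ψ : ℝ^n → ℝ differentiable and σ_Ψ-strongly convex on Δ (D_Ψ(x,y) ≥ (σ_Ψ/2)‖x−y‖² with D_Ψ(x,y) = Ψ(x) − Ψ(y) − ⟨∇Ψ(y), x−y⟩); constants A > 0, B ≥ 0, φ* ≥ 0; μ* ∈ Δ; sequences (μ^t) ⊆ Δ, (ℓ^t) ⊆ ℝ^n, (φ^t) with φ^t ≥ 0 satisfying ‖ℓ^t‖² ≤ A φ^t + B, ⟨μ* − μ^t, ℓ^t⟩ ≤ φ* − φ^t, and the mirror-step optimality ⟨η_t ℓ^t + ∇Ψ(μ^{t+1}) − ∇Ψ(μ^t), μ^{t+1} − ν⟩ ≤ 0 for all ν ∈ Δ; non-increasing step sizes 0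 < η_{t+1} ≤ η_t ≤ σ_Ψ/(2A); a† ≥ D_Ψ(μ*, μ^1); C₁ = φ* + B/A—one has for every t ≥ 1 the weighted potential bound: Σ_{k=1}^t η_k² φ^k ≤ 2 (C₁ Σ_{k=1}^t η_k² + η_1 a†). -/
/-!
Each mirror step is the standard descent inequality: by the three-point identity for Bregman
divergences and strong convexity, `η⟪ℓ, μ_t - μ*⟫ ≤ D(μ*, μ_t) - D(μ*, μ_{t+1}) + η²‖ℓ‖²/(2σ)`.
Convexity turns the left side into `η(φ_t - φ*)`, and the growth bound together with
`η ≤ σ/(2A)` absorbs a quarter of `η φ_t` from the error term. Multiplying by `η_t` and summing,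
the divergence terms telescope (Abel summation with non-increasing `η_t` and `D ≥ 0`) to at most
`η_1 a†`.
-/

open scoped RealInnerProductSpace

section Bregman

variable {E : Type*} [NormedAddCommGroup E] [InnerProductSpace ℝ E]
  {Ψ : E → ℝ} {g : E → E} {D : E → E → ℝ}

theorem bregman_three_point (hD : ∀ x y, D x y = Ψ x - Ψ y - ⟪g y, x - y⟫) (x y z : E) :
    ⟪g x - g y, y - z⟫ = D z x - D z y - D y x := by
  simp only [hD, inner_sub_left, inner_sub_right]
  ring

theorem mirror_step_le (hD : ∀ x y, D x y = Ψ x - Ψ y - ⟪g y, x - y⟫) {σ : ℝ} (hσ : 0 < σ)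
    {x x' z v : E} (hstrong : σ / 2 * ‖x' - x‖ ^ 2 ≤ D x' x)
    (hopt : ⟪v + g x' - g x, x' - z⟫ ≤ 0) :
    ⟪v, x - z⟫ ≤ D z x - D z x' + ‖v‖ ^ 2 / (2 * σ) := by
  have hdescent : ⟪v, x' - z⟫ ≤ D z x - D z x' - D x' x := by
    rw [← bregman_three_point hD, inner_sub_left]
    rw [inner_sub_left, inner_add_left] at hopt
    linarith
  have hcauchy : ⟪v, x - x'⟫ ≤ ‖v‖ * ‖x' - x‖ :=
    norm_sub_rev x x' ▸ real_inner_le_norm v (x - x')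
  have hamgm : ‖v‖ * ‖x' - x‖ - σ / 2 * ‖x' - x‖ ^ 2 ≤ ‖v‖ ^ 2 / (2 * σ) := by
    rw [le_div_iff₀ (by positivity)]
    nlinarith [sq_nonneg (‖v‖ - σ * ‖x' - x‖)]
  have hsplit : ⟪v, x - z⟫ = ⟪v, x' - z⟫ + ⟪v, x - x'⟫ := by
    rw [← inner_add_right, sub_add_sub_cancel']
  linarith

end Bregman

theorem weighted_potential_step {η φ φstar q A B σ d : ℝ} (hη : 0 < η) (hηle : η ≤ σ / (2 * A))
    (hA : 0 < A) (hσ : 0 < σ) (hB : 0 ≤ B) (hφ : 0 ≤ φ) (hq : q ≤ A * φ + B)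
    (hdesc : η * (φ - φstar) ≤ d + η ^ 2 * q / (2 * σ)) :
    3 * (η ^ 2 * φ) ≤ η ^ 2 * (4 * φstar + B / A) + 4 * (η * d) := by
  have hηA : η * A ≤ σ / 2 := by
    rw [le_div_iff₀ (by positivity)] at hηle
    linarith
  have hq' : q ≤ A * (φ + B / A) := by
    rwa [mul_add, mul_div_cancel₀ _ hA.ne']
  have hP : 0 ≤ φ + B / A := by positivity
  have habsorb : η ^ 2 * q / (2 * σ) ≤ η * (φ + B / A) / 4 := by
    rw [div_le_iff₀ (by positivity)]
    nlinarith [mul_le_mul_of_nonneg_left hq' (sq_nonneg η),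
      mul_le_mul_of_nonneg_right hηA (mul_nonneg hη.le hP)]
  have hdesc' : η * (φ - φstar) ≤ d + η * (φ + B / A) / 4 := by linarith
  linarith [mul_le_mul_of_nonneg_left hdesc' hη.le]

theorem sum_Icc_mul_sub_succ_le {η d : ℕ → ℝ} (hη : ∀ k ≥ 1, η (k + 1) ≤ η k)
    (hd : ∀ k ≥ 1, 0 ≤ d k) {t : ℕ} (ht : 1 ≤ t) :
    ∑ k ∈ Finset.Icc 1 t, η k * (d k - d (k + 1)) ≤ η 1 * d 1 - η t * d (t + 1) := by
  induction t, ht using Nat.le_induction with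
  | base => simp only [Finset.Icc_self, Finset.sum_singleton, mul_sub, le_refl]
  | succ t ht ih =>
    rw [Finset.sum_Icc_succ_top (by omega)]
    linarith [mul_le_mul_of_nonneg_right (hη t ht) (hd (t + 1) (by omega))]

theorem md_post_attack_weighted_potential_bound_general
    {n : ℕ}
    (Δ : Set (EuclideanSpace ℝ (Fin n)))
    (Ψ : EuclideanSpace ℝ (Fin n) → ℝ)
    (gΨ : EuclideanSpace ℝ (Fin n) → EuclideanSpace ℝ (Fin n))
    (D : EuclideanSpace ℝ (Fin n) → EuclideanSpace ℝ (Fin n) → ℝ)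
    (hD : ∀ x y, D x y = Ψ x - Ψ y - ⟪gΨ y, x - y⟫)
    (σΨ : ℝ) (hσΨ : 0 < σΨ)
    (hstrong : ∀ x ∈ Δ, ∀ y ∈ Δ, σΨ / 2 * ‖x - y‖ ^ 2 ≤ D x y)
    (A B φstar : ℝ) (hA : 0 < A) (hB : 0 ≤ B) (hφstar : 0 ≤ φstar)
    (μstar : EuclideanSpace ℝ (Fin n)) (hμstar : μstar ∈ Δ)
    (μ : ℕ → EuclideanSpace ℝ (Fin n)) (ℓ : ℕ → EuclideanSpace ℝ (Fin n))
    (φ : ℕ → ℝ) (η : ℕ → ℝ)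
    (hμΔ : ∀ t ≥ 1, μ t ∈ Δ)
    (hφpos : ∀ t ≥ 1, 0 ≤ φ t)
    (hgrowth : ∀ t ≥ 1, ‖ℓ t‖ ^ 2 ≤ A * φ t + B)
    (hconvx : ∀ t ≥ 1, ⟪μstar - μ t, ℓ t⟫ ≤ φstar - φ t)
    (hopt : ∀ t ≥ 1, ∀ ν ∈ Δ,
      ⟪η t • ℓ t + gΨ (μ (t + 1)) - gΨ (μ t), μ (t + 1) - ν⟫ ≤ 0)
    (hηpos : ∀ t ≥ 1, 0 < η t)
    (hηdec : ∀ t ≥ 1, η (t + 1) ≤ η t)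
    (hηle : ∀ t ≥ 1, η t ≤ σΨ / (2 * A))
    (adag : ℝ) (hadag : D μstar (μ 1) ≤ adag)
    (C₁ : ℝ) (hC₁ : C₁ = φstar + B / A) :
    ∀ t ≥ 1,
      ∑ k ∈ Finset.Icc 1 t, η k ^ 2 * φ k ≤
        2 * (C₁ * ∑ k ∈ Finset.Icc 1 t, η k ^ 2 + η 1 * adag) := by
  intro t ht
  have hD_nonneg : ∀ k ≥ 1, 0 ≤ D μstar (μ k) := fun k hk =>
    (by positivity : 0 ≤ σΨ / 2 * ‖μstar - μ k‖ ^ 2).trans (hstrong _ hμstar _ (hμΔ k hk))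
  have hstep : ∀ k ∈ Finset.Icc 1 t, 3 * (η k ^ 2 * φ k) ≤
      η k ^ 2 * (4 * φstar + B / A) + 4 * (η k * (D μstar (μ k) - D μstar (μ (k + 1)))) := by
    intro k hk
    have hk : 1 ≤ k := (Finset.mem_Icc.mp hk).1
    have hdesc := mirror_step_le hD hσΨ (hstrong _ (hμΔ (k + 1) (by omega)) _ (hμΔ k hk))
      (hopt k hk μstar hμstar)
    rw [real_inner_smul_left, norm_smul, mul_pow, Real.norm_eq_abs, sq_abs] at hdesc
    have hconv : φ k - φstar ≤ ⟪ℓ k, μ k - μstar⟫ := by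
      have h := hconvx k hk
      rw [← neg_sub (μ k) μstar, inner_neg_left, real_inner_comm] at h
      linarith
    refine weighted_potential_step (hηpos k hk) (hηle k hk) hA hσΨ hB (hφpos k hk)
      (hgrowth k hk) ?_
    linarith [mul_le_mul_of_nonneg_left hconv (hηpos k hk).le]
  have hsum := Finset.sum_le_sum hstep
  rw [Finset.sum_add_distrib, ← Finset.sum_mul, ← Finset.mul_sum, ← Finset.mul_sum] at hsum
  have htele := sum_Icc_mul_sub_succ_le hηdec hD_nonneg ht
  have hS : 0 ≤ ∑ k ∈ Finset.Icc 1 t, η k ^ 2 := Finset.sum_nonneg fun k _ => sq_nonneg _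
  have hBA : 0 ≤ B / A := by positivity
  subst hC₁
  linarith [mul_le_mul_of_nonneg_left hadag (hηpos 1 le_rfl).le,
    mul_nonneg (hηpos t ht).le (hD_nonneg (t + 1) (by omega)),
    mul_nonneg (hηpos 1 le_rfl).le (hD_nonneg 1 le_rfl), mul_nonneg hφstar hS, mul_nonneg hBA hS]

/-- Second part of Lemma 2 of the paper: weighted potential bound along the
post-attack mirror-descent trajectory,
`Σ_{k=1}^t η_k² φ^k ≤ 2 (C₁ Σ_{k=1}^t η_k² + η_1 a†)`. -/
theorem md_post_attack_weighted_potential_bound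
    {n : ℕ}
    (Δ : Set (EuclideanSpace ℝ (Fin n)))
    (hΔne : Δ.Nonempty) (hΔclosed : IsClosed Δ) (hΔconv : Convex ℝ Δ)
    (Ψ : EuclideanSpace ℝ (Fin n) → ℝ)
    (gΨ : EuclideanSpace ℝ (Fin n) → EuclideanSpace ℝ (Fin n))
    (hΨ : ∀ x, HasGradientAt Ψ (gΨ x) x)
    (D : EuclideanSpace ℝ (Fin n) → EuclideanSpace ℝ (Fin n) → ℝ)
    (hD : ∀ x y, D x y = Ψ x - Ψ y - ⟪gΨ y, x - y⟫)
    (σΨ : ℝ) (hσΨ : 0 < σΨ)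
    (hstrong : ∀ x ∈ Δ, ∀ y ∈ Δ, σΨ / 2 * ‖x - y‖ ^ 2 ≤ D x y)
    (A B φstar : ℝ) (hA : 0 < A) (hB : 0 ≤ B) (hφstar : 0 ≤ φstar)
    (μstar : EuclideanSpace ℝ (Fin n)) (hμstar : μstar ∈ Δ)
    (μ : ℕ → EuclideanSpace ℝ (Fin n)) (ℓ : ℕ → EuclideanSpace ℝ (Fin n))
    (φ : ℕ → ℝ) (η : ℕ → ℝ)
    (hμΔ : ∀ t ≥ 1, μ t ∈ Δ)
    (hφpos : ∀ t ≥ 1, 0 ≤ φ t)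
    (hgrowth : ∀ t ≥ 1, ‖ℓ t‖ ^ 2 ≤ A * φ t + B)
    (hconvx : ∀ t ≥ 1, ⟪μstar - μ t, ℓ t⟫ ≤ φstar - φ t)
    (hopt : ∀ t ≥ 1, ∀ ν ∈ Δ,
      ⟪η t • ℓ t + gΨ (μ (t + 1)) - gΨ (μ t), μ (t + 1) - ν⟫ ≤ 0)
    (hηpos : ∀ t ≥ 1, 0 < η t)
    (hηdec : ∀ t ≥ 1, η (t + 1) ≤ η t)
    (hηle : ∀ t ≥ 1, η t ≤ σΨ / (2 * A))
    (adag : ℝ) (hadag : D μstar (μ 1) ≤ adag)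
    (C₁ : ℝ) (hC₁ : C₁ = φstar + B / A) :
    ∀ t ≥ 1,
      ∑ k ∈ Finset.Icc 1 t, η k ^ 2 * φ k ≤
        2 * (C₁ * ∑ k ∈ Finset.Icc 1 t, η k ^ 2 + η 1 * adag) :=
  md_post_attack_weighted_potential_bound_general Δ Ψ gΨ D hD σΨ hσΨ hstrong A B φstar hA hB hφstar
    μstar hμstar μ ℓ φ η hμΔ hφpos hgrowth hconvx hopt hηpos hηdec hηle adag hadag C₁ hC₁
end

section
/- Let Δ ⊆ ℝ^n be a nonempty convex set, let Φ : ℝ^n → ℝ be convex and differentiable, and let A > 0, B ≥ 0 be constants such that ‖∇Φ(μ)‖² ≤ A Φ(μ) + B for all μ ∈ Δ. Let μ* ∈ Δ be a minimizer of Φ over Δ and set Φ* = Φ(μ*), assuming A Φ* + B ≥ 0. Then for all μ ∈ Δ: ‖∇Φ(μ)‖² ≤ 2 ( A² ‖μ − μ*‖² + A Φ* + B ). -/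
/-!
Convexity gives `Φ μ ≤ Φ(μ*) + ⟪∇Φ(μ), μ - μ*⟫`, so the growth assumption becomes
`‖∇Φ(μ)‖² ≤ A Φ* + B + A ‖∇Φ(μ)‖ ‖μ - μ*‖` by Cauchy–Schwarz; the AM–GM bound
`A ‖∇Φ(μ)‖ ‖μ - μ*‖ ≤ ‖∇Φ(μ)‖² / 2 + A² ‖μ - μ*‖² / 2` then absorbs half of the left-hand side.
-/

open scoped RealInnerProductSpace

theorem ConvexOn.add_fderiv_sub_le {E : Type*} [NormedAddCommGroup E] [NormedSpace ℝ E]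
    {s : Set E} {f : E → ℝ} {f' : E →L[ℝ] ℝ} {x y : E}
    (hf : ConvexOn ℝ s f) (hx : x ∈ s) (hy : y ∈ s) (hf' : HasFDerivAt f f' x) :
    f x + f' (y - x) ≤ f y := by
  set L : ℝ →ᵃ[ℝ] E := AffineMap.lineMap x y
  have hline : ConvexOn ℝ (L ⁻¹' s) (f ∘ L) := hf.comp_affineMap L
  have hderiv : HasDerivAt (f ∘ L) (f' (y - x)) 0 :=
    hf'.comp_hasDerivAt_of_eq 0 AffineMap.hasDerivAt_lineMap (AffineMap.lineMap_apply_zero x y).symm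
  have hslope := hline.le_slope_of_hasDerivAt (by simpa [L] using hx) (by simpa [L] using hy)
    one_pos hderiv
  simp only [slope, L, Function.comp_apply, AffineMap.lineMap_apply_zero,
    AffineMap.lineMap_apply_one, sub_zero, inv_one, vsub_eq_sub, one_smul] at hslope
  linarith

theorem ConvexOn.add_inner_sub_le {E : Type*} [NormedAddCommGroup E] [InnerProductSpace ℝ E]
    [CompleteSpace E] {s : Set E} {f : E → ℝ} {g x y : E}
    (hf : ConvexOn ℝ s f) (hx : x ∈ s) (hy : y ∈ s) (hg : HasGradientAt f g x) :
    f x + ⟪g, y - x⟫ ≤ f y :=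
  hf.add_fderiv_sub_le hx hy hg.hasFDerivAt

theorem sq_norm_le_of_sq_norm_le_add_inner {E : Type*} [NormedAddCommGroup E]
    [InnerProductSpace ℝ E] {g d : E} {A B c : ℝ} (hA : 0 ≤ A)
    (h : ‖g‖ ^ 2 ≤ A * (c + ⟪g, d⟫) + B) :
    ‖g‖ ^ 2 ≤ A ^ 2 * ‖d‖ ^ 2 + 2 * (A * c + B) := by
  have hcs : A * ⟪g, d⟫ ≤ A * (‖g‖ * ‖d‖) := mul_le_mul_of_nonneg_left (real_inner_le_norm g d) hA
  nlinarith [sq_nonneg (‖g‖ - A * ‖d‖)]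

theorem ConvexOn.sq_norm_gradient_le {E : Type*} [NormedAddCommGroup E] [InnerProductSpace ℝ E]
    [CompleteSpace E] {s : Set E} {f : E → ℝ} {g x y : E} {A B : ℝ}
    (hf : ConvexOn ℝ s f) (hx : x ∈ s) (hy : y ∈ s) (hg : HasGradientAt f g x) (hA : 0 ≤ A)
    (hgrowth : ‖g‖ ^ 2 ≤ A * f x + B) :
    ‖g‖ ^ 2 ≤ A ^ 2 * ‖x - y‖ ^ 2 + 2 * (A * f y + B) := by
  refine sq_norm_le_of_sq_norm_le_add_inner hA (hgrowth.trans ?_)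
  have hfirst := hf.add_inner_sub_le hx hy hg
  rw [← neg_sub x y, inner_neg_right] at hfirst
  gcongr
  linarith

theorem gradient_self_bound_general
    {n : ℕ}
    (Δ : Set (EuclideanSpace ℝ (Fin n)))
    (Φ : EuclideanSpace ℝ (Fin n) → ℝ)
    (gΦ : EuclideanSpace ℝ (Fin n) → EuclideanSpace ℝ (Fin n))
    (hΦconv : ConvexOn ℝ Set.univ Φ)
    (hΦgrad : ∀ x, HasGradientAt Φ (gΦ x) x)
    (A B : ℝ) (hA : 0 < A)
    (hgrowth : ∀ μ ∈ Δ, ‖gΦ μ‖ ^ 2 ≤ A * Φ μ + B)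
    (μstar : EuclideanSpace ℝ (Fin n))
    (Φstar : ℝ) (hΦstar : Φstar = Φ μstar) :
    ∀ μ ∈ Δ, ‖gΦ μ‖ ^ 2 ≤ 2 * (A ^ 2 * ‖μ - μstar‖ ^ 2 + A * Φstar + B) := by
  intro μ hμ
  have hbound := hΦconv.sq_norm_gradient_le (Set.mem_univ μ) (Set.mem_univ μstar) (hΦgrad μ)
    hA.le (hgrowth μ hμ)
  have hdist_nonneg : 0 ≤ A ^ 2 * ‖μ - μstar‖ ^ 2 := by positivity
  rw [← hΦstar] at hbound
  linarith

/-- Self-bounding property of the gradient of the mean Beckmann potential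
(auxiliary Lemma of the paper):
`‖∇Φ(μ)‖² ≤ 2 (A² ‖μ − μ*‖² + A Φ* + B)` for all `μ ∈ Δ`. -/
theorem gradient_self_bound
    {n : ℕ}
    (Δ : Set (EuclideanSpace ℝ (Fin n)))
    (hΔne : Δ.Nonempty) (hΔconv : Convex ℝ Δ)
    (Φ : EuclideanSpace ℝ (Fin n) → ℝ)
    (gΦ : EuclideanSpace ℝ (Fin n) → EuclideanSpace ℝ (Fin n))
    (hΦconv : ConvexOn ℝ Set.univ Φ)
    (hΦgrad : ∀ x, HasGradientAt Φ (gΦ x) x)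
    (A B : ℝ) (hA : 0 < A) (hB : 0 ≤ B)
    (hgrowth : ∀ μ ∈ Δ, ‖gΦ μ‖ ^ 2 ≤ A * Φ μ + B)
    (μstar : EuclideanSpace ℝ (Fin n)) (hμstarΔ : μstar ∈ Δ)
    (hmin : ∀ μ ∈ Δ, Φ μstar ≤ Φ μ)
    (Φstar : ℝ) (hΦstar : Φstar = Φ μstar)
    (hpos : 0 ≤ A * Φstar + B) :
    ∀ μ ∈ Δ, ‖gΦ μ‖ ^ 2 ≤ 2 * (A ^ 2 * ‖μ - μstar‖ ^ 2 + A * Φstar + B) :=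
  gradient_self_bound_general Δ Φ gΦ hΦconv hΦgrad A B hA hgrowth μstar Φstar hΦstar
end

section
/- Fix a finite index set of n paths partitioned into nonempty blocks (𝒫_w)_{w∈𝒲} with demands m_w > 0, and let Δ = {μ ∈ ℝ^n : μ_p ≥ 0 for all p, and Σ_{p∈𝒫_w} μ_p = m_w for every w ∈ 𝒲}. Let μ, μ† ∈ Δ be such that for every p, μ_p > 0 implies μ†_p > 0. For each w let γ_w = min{ μ†_p : p ∈ 𝒫_w, μ†_p > 0 } and γ = min_{w∈𝒲} γ_w, and let M̄ = Σ_{w∈𝒲} m_w. Then (with natural logarithm and the convention 0 log 0 = 0) the negentropy Bregman divergence satisfies D(μ, μ†) = Σ_p μ_p log(μ_p/μ†_p) ≤ Σ_{w∈𝒲} ( Σ_{p∈𝒫_w} |μ_p − μ†_p| )² / γ_w ≤ 4 M̄² / γ. -/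
/-!
Blockwise, `log t ≤ t - 1` bounds the divergence by the chi-square distance
`Σ_p (μ_p - μ†_p)² / μ†_p` (the linear remainder `Σ_p (μ_p - μ†_p)` vanishes because both flows
carry the demand `m_w`). Each denominator is at least `γ_w`, and a sum of squares of nonnegative
numbers is at most the square of their sum. Finally the blockwise `ℓ₁` distance is at most
`2 m_w`, and `Σ_w m_w² ≤ M̄²`.
-/

open Finset Function Real

lemma mul_log_div_le_sq_sub_div_add_sub {x y : ℝ} (hx : 0 ≤ x) (hxy : 0 < x → 0 < y) :
    x * log (x / y) ≤ (x - y) ^ 2 / y + (x - y) := by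
  rcases hx.eq_or_lt with rfl | hx
  · simp [sq, mul_self_div_self]
  · have hy := hxy hx
    calc x * log (x / y) ≤ x * (x / y - 1) :=
          mul_le_mul_of_nonneg_left (log_le_sub_one_of_pos (by positivity)) hx.le
      _ = (x - y) ^ 2 / y + (x - y) := by field_simp; ring

section Finset

variable {ι : Type*} {s : Finset ι} {x y : ι → ℝ}

lemma sum_mul_log_div_le_sum_sq_sub_div (hx : ∀ i ∈ s, 0 ≤ x i)
    (hxy : ∀ i ∈ s, 0 < x i → 0 < y i) (hsum : ∑ i ∈ s, x i = ∑ i ∈ s, y i) :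
    ∑ i ∈ s, x i * log (x i / y i) ≤ ∑ i ∈ s, (x i - y i) ^ 2 / y i := by
  calc ∑ i ∈ s, x i * log (x i / y i)
      ≤ ∑ i ∈ s, ((x i - y i) ^ 2 / y i + (x i - y i)) :=
        sum_le_sum fun i hi => mul_log_div_le_sq_sub_div_add_sub (hx i hi) (hxy i hi)
    _ = ∑ i ∈ s, (x i - y i) ^ 2 / y i := by
        rw [sum_add_distrib, sum_sub_distrib, hsum, sub_self, add_zero]

lemma sum_sq_sub_div_le_sq_sum_abs_sub_div {c : ℝ} (hc : 0 < c)
    (hcy : ∀ i ∈ s, 0 < y i → c ≤ y i) :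
    ∑ i ∈ s, (x i - y i) ^ 2 / y i ≤ (∑ i ∈ s, |x i - y i|) ^ 2 / c := by
  calc ∑ i ∈ s, (x i - y i) ^ 2 / y i
      ≤ ∑ i ∈ s, |x i - y i| ^ 2 / c := by
        refine sum_le_sum fun i hi => ?_
        rw [sq_abs]
        rcases le_or_gt (y i) 0 with hy | hy
        · exact (div_nonpos_of_nonneg_of_nonpos (sq_nonneg _) hy).trans (by positivity)
        · exact div_le_div_of_nonneg_left (sq_nonneg _) hc (hcy i hi hy)
    _ ≤ (∑ i ∈ s, |x i - y i|) ^ 2 / c := by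
        rw [← sum_div]
        gcongr
        exact sum_sq_le_sq_sum_of_nonneg fun i _ => abs_nonneg _

lemma sum_abs_sub_le_sum_add_sum (hx : ∀ i ∈ s, 0 ≤ x i) (hy : ∀ i ∈ s, 0 ≤ y i) :
    ∑ i ∈ s, |x i - y i| ≤ ∑ i ∈ s, x i + ∑ i ∈ s, y i := by
  rw [← sum_add_distrib]
  refine sum_le_sum fun i hi => ?_
  simpa only [abs_of_nonneg (hx i hi), abs_of_nonneg (hy i hi)] using abs_sub (x i) (y i)

end Finset

lemma sum_eq_sum_sum_of_partition {ι W M : Type*} [Fintype ι] [Fintype W] [DecidableEq ι]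
    [AddCommMonoid M] (P : W → Finset ι) (hdisj : Pairwise (Disjoint on P))
    (hcover : ∀ i, ∃ w, i ∈ P w) (f : ι → M) :
    ∑ i, f i = ∑ w, ∑ i ∈ P w, f i := by
  have huniv : (univ : Finset ι) = univ.biUnion P := by
    ext i
    simpa using hcover i
  rw [huniv, sum_biUnion fun w _ w' _ hne => hdisj hne]

theorem supp_attack_magnitude_bound_general
    {n : ℕ} {W : Type*} [Fintype W] [Nonempty W]
    (P : W → Finset (Fin n)) (m : W → ℝ)
    (hP_disj : ∀ w w', w ≠ w' → Disjoint (P w) (P w'))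
    (hP_cover : ∀ p, ∃ w, p ∈ P w)
    (hm : ∀ w, 0 < m w)
    (Δ : Set (Fin n → ℝ))
    (hΔ : Δ = {μ : Fin n → ℝ | (∀ p, 0 ≤ μ p) ∧ ∀ w, ∑ p ∈ P w, μ p = m w})
    (μ μdag : Fin n → ℝ) (hμ : μ ∈ Δ) (hμdag : μdag ∈ Δ)
    (hsupp : ∀ p, 0 < μ p → 0 < μdag p)
    (γw : W → ℝ)
    (hγw : ∀ w, IsLeast {x : ℝ | ∃ p ∈ P w, 0 < μdag p ∧ μdag p = x} (γw w))
    (γ : ℝ) (hγ : γ = Finset.univ.inf' Finset.univ_nonempty γw)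
    (Mbar : ℝ) (hMbar : Mbar = ∑ w, m w) :
    (∑ p, μ p * Real.log (μ p / μdag p)) ≤
        (∑ w, (∑ p ∈ P w, |μ p - μdag p|) ^ 2 / γw w) ∧
      (∑ w, (∑ p ∈ P w, |μ p - μdag p|) ^ 2 / γw w) ≤ 4 * Mbar ^ 2 / γ := by
  subst hΔ hγ hMbar
  obtain ⟨hμ0, hμm⟩ := hμ
  obtain ⟨hν0, hνm⟩ := hμdag
  have hγw_pos (w : W) : 0 < γw w := by
    obtain ⟨p, -, hp, hpγ⟩ := (hγw w).1
    exact hpγ ▸ hp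
  have hγ_pos : 0 < univ.inf' univ_nonempty γw := (lt_inf'_iff _).2 fun w _ => hγw_pos w
  constructor
  · rw [sum_eq_sum_sum_of_partition P hP_disj hP_cover]
    refine sum_le_sum fun w _ => ?_
    calc ∑ p ∈ P w, μ p * log (μ p / μdag p)
        ≤ ∑ p ∈ P w, (μ p - μdag p) ^ 2 / μdag p :=
          sum_mul_log_div_le_sum_sq_sub_div (fun p _ => hμ0 p) (fun p _ => hsupp p)
            ((hμm w).trans (hνm w).symm)
      _ ≤ _ := sum_sq_sub_div_le_sq_sum_abs_sub_div (hγw_pos w)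
          fun p hp hpos => (hγw w).2 ⟨p, hp, hpos, rfl⟩
  · have hℓ₁ (w : W) : ∑ p ∈ P w, |μ p - μdag p| ≤ 2 * m w := by
      have := sum_abs_sub_le_sum_add_sum (s := P w) (fun p _ => hμ0 p) (fun p _ => hν0 p)
      linarith [hμm w, hνm w]
    calc ∑ w, (∑ p ∈ P w, |μ p - μdag p|) ^ 2 / γw w
        ≤ ∑ w, (2 * m w) ^ 2 / univ.inf' univ_nonempty γw := by
          gcongr with w
          · exact hℓ₁ w
          · exact inf'_le _ (mem_univ w)
      _ ≤ (∑ w, 2 * m w) ^ 2 / univ.inf' univ_nonempty γw := by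
          rw [← sum_div]
          gcongr
          exact sum_sq_le_sq_sum_of_nonneg fun w _ => by linarith [hm w]
      _ = 4 * (∑ w, m w) ^ 2 / univ.inf' univ_nonempty γw := by rw [← mul_sum]; ring

/-- Magnitude bound for the `Supp` informational attack (Proposition 2(b) of
the paper), via a reverse Pinsker-type inequality: for flows `μ, μ† ∈ Δ` with
`supp(μ) ⊆ supp(μ†)`, the negentropy Bregman divergence satisfies
`D(μ, μ†) = Σ_p μ_p log(μ_p/μ†_p) ≤ Σ_w (Σ_{p∈𝒫_w} |μ_p − μ†_p|)²/γ_w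
 ≤ 4M̄²/γ`. -/
theorem supp_attack_magnitude_bound
    {n : ℕ} {W : Type*} [Fintype W] [Nonempty W]
    (P : W → Finset (Fin n)) (m : W → ℝ)
    (hP_ne : ∀ w, (P w).Nonempty)
    (hP_disj : ∀ w w', w ≠ w' → Disjoint (P w) (P w'))
    (hP_cover : ∀ p, ∃ w, p ∈ P w)
    (hm : ∀ w, 0 < m w)
    (Δ : Set (Fin n → ℝ))
    (hΔ : Δ = {μ : Fin n → ℝ | (∀ p, 0 ≤ μ p) ∧ ∀ w, ∑ p ∈ P w, μ p = m w})
    (μ μdag : Fin n → ℝ) (hμ : μ ∈ Δ) (hμdag : μdag ∈ Δ)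
    (hsupp : ∀ p, 0 < μ p → 0 < μdag p)
    (γw : W → ℝ)
    (hγw : ∀ w, IsLeast {x : ℝ | ∃ p ∈ P w, 0 < μdag p ∧ μdag p = x} (γw w))
    (γ : ℝ) (hγ : γ = Finset.univ.inf' Finset.univ_nonempty γw)
    (Mbar : ℝ) (hMbar : Mbar = ∑ w, m w) :
    (∑ p, μ p * Real.log (μ p / μdag p)) ≤
        (∑ w, (∑ p ∈ P w, |μ p - μdag p|) ^ 2 / γw w) ∧
      (∑ w, (∑ p ∈ P w, |μ p - μdag p|) ^ 2 / γw w) ≤ 4 * Mbar ^ 2 / γ :=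
  supp_attack_magnitude_bound_general P m hP_disj hP_cover hm Δ hΔ μ μdag hμ hμdag hsupp γw hγw γ hγ
    Mbar hMbar
end

section
/- Let Δ ⊆ ℝ^n be a nonempty convex set, let φ, Φ : ℝ^n → ℝ be convex and differentiable, and let A > 0, B ≥ 0 be constants such that ‖∇φ(ν)‖² ≤ A φ(ν) + B and ‖∇Φ(ν)‖² ≤ A Φ(ν) + B for all ν ∈ Δ. Let μ* ∈ Δ and set φ* = φ(μ*), Φ* = Φ(μ*), assuming A φ* + B ≥ 0 and A Φ* + B ≥ 0. Then for every μ ∈ Δ: |⟨μ* − μ, ∇φ(μ) − ∇Φ(μ)⟩| ≤ (4A² + 1) ‖μ − μ*‖² + 2A (φ* + Φ*) + 4B. -/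
/-!
Write `r = ‖μ - μ*‖`. Convexity gives `φ μ ≤ φ* + ⟪∇φ μ, μ - μ*⟫ ≤ φ* + ‖∇φ μ‖ r`, so the growth
condition makes `g = ‖∇φ μ‖` satisfy the quadratic inequality `g² ≤ A g r + (A φ* + B)`; hence
`r g ≤ (A² + 1)/2 · r² + (A φ* + B)`, and likewise for `Φ`. Cauchy–Schwarz and the triangle
inequality bound the increment by `r (‖∇φ μ‖ + ‖∇Φ μ‖)`.
-/

open scoped RealInnerProductSpace

section FirstOrder

variable {E : Type*} {s : Set E} {f : E → ℝ} {x y : E}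

theorem ConvexOn.le_sub_of_hasFDerivAt [NormedAddCommGroup E] [NormedSpace ℝ E]
    {f' : E →L[ℝ] ℝ} (hf : ConvexOn ℝ s f) (hx : x ∈ s) (hy : y ∈ s) (hf' : HasFDerivAt f f' x) :
    f' (y - x) ≤ f y - f x := by
  let L : ℝ →ᵃ[ℝ] E := AffineMap.lineMap x y
  have hL : ∀ t : ℝ, L t = t • (y - x) + x := fun t => AffineMap.lineMap_apply x y t
  have hL0 : L 0 = x := by simp [hL]
  have hL1 : L 1 = y := by simp [hL]
  have hline : HasDerivAt (fun t : ℝ => L t) (y - x) 0 := by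
    simp only [hL]
    simpa using ((hasDerivAt_id (0 : ℝ)).smul_const (y - x)).add_const x
  have hderiv : HasDerivAt (f ∘ L) (f' (y - x)) 0 := by
    rw [← hL0] at hf'
    exact hf'.comp_hasDerivAt 0 hline
  have := (hf.comp_affineMap L).le_slope_of_hasDerivAt (by simpa [hL0]) (by simpa [hL1])
    one_pos hderiv
  simpa [slope, hL0, hL1] using this

variable [NormedAddCommGroup E] [InnerProductSpace ℝ E] [CompleteSpace E] {g : E} {A B : ℝ}

theorem ConvexOn.inner_gradient_le_sub (hf : ConvexOn ℝ s f) (hx : x ∈ s) (hy : y ∈ s)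
    (hg : HasGradientAt f g x) : ⟪g, y - x⟫ ≤ f y - f x := by
  simpa using hf.le_sub_of_hasFDerivAt hx hy hg.hasFDerivAt

theorem ConvexOn.sq_norm_gradient_le_of_growth (hf : ConvexOn ℝ s f) (hx : x ∈ s) (hy : y ∈ s)
    (hg : HasGradientAt f g x) (hA : 0 ≤ A) (hgrowth : ‖g‖ ^ 2 ≤ A * f x + B) :
    ‖g‖ ^ 2 ≤ A * ‖g‖ * ‖x - y‖ + (A * f y + B) := by
  have hconv : f x - f y ≤ ⟪g, x - y⟫ := by
    rw [← neg_sub y x, inner_neg_right]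
    linarith [hf.inner_gradient_le_sub hx hy hg]
  have hcs : ⟪g, x - y⟫ ≤ ‖g‖ * ‖x - y‖ := real_inner_le_norm g (x - y)
  nlinarith

theorem ConvexOn.norm_gradient_mul_le_of_growth (hf : ConvexOn ℝ s f) (hx : x ∈ s) (hy : y ∈ s)
    (hg : HasGradientAt f g x) (hA : 0 ≤ A) (hgrowth : ‖g‖ ^ 2 ≤ A * f x + B) :
    ‖g‖ * ‖x - y‖ ≤ (A ^ 2 + 1) / 2 * ‖x - y‖ ^ 2 + (A * f y + B) := by
  have hquad := hf.sq_norm_gradient_le_of_growth hx hy hg hA hgrowth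
  nlinarith [sq_nonneg (‖g‖ - A * ‖x - y‖), sq_nonneg (‖g‖ - ‖x - y‖)]

end FirstOrder

theorem increment_magnitude_bound_general
    {n : ℕ}
    (Δ : Set (EuclideanSpace ℝ (Fin n)))
    (φ Φ : EuclideanSpace ℝ (Fin n) → ℝ)
    (gφ gΦ : EuclideanSpace ℝ (Fin n) → EuclideanSpace ℝ (Fin n))
    (hφconv : ConvexOn ℝ Set.univ φ)
    (hΦconv : ConvexOn ℝ Set.univ Φ)
    (hφgrad : ∀ x, HasGradientAt φ (gφ x) x)
    (hΦgrad : ∀ x, HasGradientAt Φ (gΦ x) x)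
    (A B : ℝ) (hA : 0 < A)
    (hgrowthφ : ∀ ν ∈ Δ, ‖gφ ν‖ ^ 2 ≤ A * φ ν + B)
    (hgrowthΦ : ∀ ν ∈ Δ, ‖gΦ ν‖ ^ 2 ≤ A * Φ ν + B)
    (μstar : EuclideanSpace ℝ (Fin n))
    (φstar Φstar : ℝ) (hφstar : φstar = φ μstar) (hΦstar : Φstar = Φ μstar)
    (hφpos : 0 ≤ A * φstar + B) (hΦpos : 0 ≤ A * Φstar + B) :
    ∀ μ ∈ Δ,
      |⟪μstar - μ, gφ μ - gΦ μ⟫| ≤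
        (4 * A ^ 2 + 1) * ‖μ - μstar‖ ^ 2 + 2 * A * (φstar + Φstar) + 4 * B := by
  intro μ hμ
  subst hφstar hΦstar
  have hφ := hφconv.norm_gradient_mul_le_of_growth (Set.mem_univ μ) (Set.mem_univ μstar)
    (hφgrad μ) hA.le (hgrowthφ μ hμ)
  have hΦ := hΦconv.norm_gradient_mul_le_of_growth (Set.mem_univ μ) (Set.mem_univ μstar)
    (hΦgrad μ) hA.le (hgrowthΦ μ hμ)
  have hincr : |⟪μstar - μ, gφ μ - gΦ μ⟫| ≤ ‖μ - μstar‖ * (‖gφ μ‖ + ‖gΦ μ‖) :=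
    calc |⟪μstar - μ, gφ μ - gΦ μ⟫| ≤ ‖μstar - μ‖ * ‖gφ μ - gΦ μ‖ := abs_real_inner_le_norm _ _
      _ ≤ ‖μ - μstar‖ * (‖gφ μ‖ + ‖gΦ μ‖) := by
        rw [norm_sub_rev]
        exact mul_le_mul_of_nonneg_left (norm_sub_le _ _) (norm_nonneg _)
  nlinarith [sq_nonneg (A * ‖μ - μstar‖)]

/-- Increment-magnitude bound from the proof of Proposition 1 of the paper:
for convex differentiable `φ, Φ` satisfying the linear growth condition
`‖∇·‖² ≤ A(·) + B` on `Δ`, and `μ* ∈ Δ` with `φ* = φ(μ*)`, `Φ* = Φ(μ*)`,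
`|⟨μ* − μ, ∇φ(μ) − ∇Φ(μ)⟩| ≤ (4A² + 1)‖μ − μ*‖² + 2A(φ* + Φ*) + 4B`. -/
theorem increment_magnitude_bound
    {n : ℕ}
    (Δ : Set (EuclideanSpace ℝ (Fin n)))
    (hΔne : Δ.Nonempty) (hΔconv : Convex ℝ Δ)
    (φ Φ : EuclideanSpace ℝ (Fin n) → ℝ)
    (gφ gΦ : EuclideanSpace ℝ (Fin n) → EuclideanSpace ℝ (Fin n))
    (hφconv : ConvexOn ℝ Set.univ φ)
    (hΦconv : ConvexOn ℝ Set.univ Φ)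
    (hφgrad : ∀ x, HasGradientAt φ (gφ x) x)
    (hΦgrad : ∀ x, HasGradientAt Φ (gΦ x) x)
    (A B : ℝ) (hA : 0 < A) (hB : 0 ≤ B)
    (hgrowthφ : ∀ ν ∈ Δ, ‖gφ ν‖ ^ 2 ≤ A * φ ν + B)
    (hgrowthΦ : ∀ ν ∈ Δ, ‖gΦ ν‖ ^ 2 ≤ A * Φ ν + B)
    (μstar : EuclideanSpace ℝ (Fin n)) (hμstar : μstar ∈ Δ)
    (φstar Φstar : ℝ) (hφstar : φstar = φ μstar) (hΦstar : Φstar = Φ μstar)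
    (hφpos : 0 ≤ A * φstar + B) (hΦpos : 0 ≤ A * Φstar + B) :
    ∀ μ ∈ Δ,
      |⟪μstar - μ, gφ μ - gΦ μ⟫| ≤
        (4 * A ^ 2 + 1) * ‖μ - μstar‖ ^ 2 + 2 * A * (φstar + Φstar) + 4 * B :=
  increment_magnitude_bound_general Δ φ Φ gφ gΦ hφconv hΦconv hφgrad hΦgrad A B hA hgrowthφ hgrowthΦ
    μstar φstar Φstar hφstar hΦstar hφpos hΦpos
end
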